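/- Let f : ℝ → ℝ be continuous and monotone nondecreasing, and let f̂ : ℝ × ℝ → ℝ be a monotone numerical flux, i.e., f̂ is nondecreasing in its first argument, nonincreasing in its second argument, and consistent: f̂(u, u) = f(u). Then for all real a, b, the cell-interface entropy term Θ = ∫_{a}^{b} (f(u) - f̂(a, b)) du is nonnegative (where the integral from a to b is interpreted with sign, i.e., Θ = ∫_a^b (f(u) - f̂(a,b)) du ≥ 0 regardless of the order of a and b). -/
import Mathlib


/-- cell dissipation property of a monotone numerical flux. -/
theorem stmt11 (f : ℝ → ℝ) (hf : Continuous f) (hmono : Monotone f)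
    (fhat : ℝ → ℝ → ℝ)
    (hfhat1 : ∀ b, Monotone (fun a => fhat a b))
    (hfhat2 : ∀ a, Antitone (fun b => fhat a b))
    (hcons : ∀ u, fhat u u = f u) :
    ∀ a b : ℝ, 0 ≤ ∫ u in a..b, (f u - fhat a b) := by
  intro a b
  rcases le_or_gt a b with hab | hba
  · apply intervalIntegral.integral_nonneg hab
    intro u hu
    have h1 : fhat a b ≤ fhat u b := hfhat1 b hu.1
    have h2 : fhat u b ≤ fhat u u := hfhat2 u hu.2
    rw [hcons u] at h2
    linarith
  · rw [intervalIntegral.integral_symm]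
    have : ∫ u in b..a, (f u - fhat a b) ≤ 0 := by
      have := intervalIntegral.integral_nonneg (μ := MeasureTheory.volume) (f := fun u => fhat a b - f u)
        (le_of_lt hba) (fun u hu => by
          have h1 : fhat u u ≤ fhat a u := hfhat1 u hu.2
          have h2 : fhat a u ≤ fhat a b := hfhat2 a hu.1
          rw [hcons u] at h1
          simp only [sub_nonneg]; linarith)
      have hint : IntervalIntegrable (fun u => f u - fhat a b) MeasureTheory.volume b a :=
        ((hf.sub continuous_const).intervalIntegrable b a)
      have heq : ∫ u in b..a, (fhat a b - f u) = -∫ u in b..a, (f u - fhat a b) := by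
        rw [← intervalIntegral.integral_neg]; congr 1; ext u; ring
      rw [heq] at this
      linarith
    linarith
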